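/- Define f(n,k) = Σ_{j∈ℤ} (−1)^j q^{j(3j−1)/2} [n choose k−j]_q [n choose k+j]_q. Then for all n ≥ 1 and all k, f(n,k) = q^k f(n−1,k) + f(n−1,k−1). -/

import Mathlib

open LaurentPolynomial

/-- The Gaussian (q-)binomial coefficient `[n choose k]_q`, as a Laurent polynomial in `q`,
with the convention that it vanishes for `k < 0` or `k > n`.  Defined via the standard
Pascal-type recurrence `[n+1, k] = q^k [n, k] + [n, k-1]`. -/
noncomputable def qb : ℕ → ℤ → LaurentPolynomial ℤ
  | 0, k => if k = 0 then 1 else 0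
  | (n+1), k => T k * qb n k + qb n (k-1)

/-- The variable `q`. -/
noncomputable def q : LaurentPolynomial ℤ := T 1

/-- `f n k = Σ_{j∈ℤ} (−1)^j q^{j(3j−1)/2} [n choose k−j]_q [n choose k+j]_q`. -/
noncomputable def f (n : ℕ) (k : ℤ) : LaurentPolynomial ℤ :=
  ∑ᶠ j : ℤ, (-1 : LaurentPolynomial ℤ) ^ j.natAbs * T (j * (3 * j - 1) / 2) *
    qb n (k - j) * qb n (k + j)

/-!
Expand both `q`-binomials in `f (m + 1) k` by the `q`-Pascal rule. Of the four resulting sums, the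
reflection `j ↦ 1 - j`, which fixes `pentagonal j - j` and flips the sign `(-1)^|j|`, kills one;
`j ↦ -j` turns another into `q^k B` with `B = Σ (-1)^|j| q^{pentagonal j} [m, k-j] [m, k+j-1]`;
the last one is `f m (k - 1)`. The absorption identity
`(q^a - 1) [m, a] = (q^{m+1-a} - 1) [m, a-1]` and the same two reflections give
`(1 - q^k) f m k = B`, which merges `q^{2k} f m k + q^k B` into `q^k f m k`.
-/

lemma qb_succ (n : ℕ) (a : ℤ) : qb (n + 1) a = T a * qb n a + qb n (a - 1) := by
  rw [qb]

lemma qb_of_neg (n : ℕ) {a : ℤ} (ha : a < 0) : qb n a = 0 := by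
  induction n generalizing a with
  | zero => simp [qb, ha.ne]
  | succ n ih => rw [qb_succ, ih ha, ih (by omega), mul_zero, add_zero]

lemma qb_of_lt (n : ℕ) {a : ℤ} (ha : n < a) : qb n a = 0 := by
  induction n generalizing a with
  | zero => simp only [Nat.cast_zero] at ha; simp [qb, ha.ne']
  | succ n ih => rw [qb_succ, ih (by omega), ih (by omega), mul_zero, add_zero]

lemma hasFiniteSupport_qb_sub (n : ℕ) (a : ℤ) :
    Function.HasFiniteSupport fun j => qb n (a - j) :=
  (Set.finite_Icc (a - n) a).subset fun j hj => by
    by_contra hj'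
    have : a - j < 0 ∨ (n : ℤ) < a - j := by simp only [Set.mem_Icc] at hj'; omega
    rcases this with h | h
    exacts [hj (qb_of_neg n h), hj (qb_of_lt n h)]

/-- The `q`-analogue of `a * C(n, a) = (n + 1 - a) * C(n, a - 1)`. -/
lemma T_sub_one_mul_qb (n : ℕ) (a : ℤ) :
    (T a - 1) * qb n a = (T (n + 1 - a) - 1) * qb n (a - 1) := by
  induction n generalizing a with
  | zero =>
    rcases eq_or_ne a 0 with rfl | h0
    · simp [qb]
    rcases eq_or_ne a 1 with rfl | h1
    · simp [qb]
    · simp [qb, h0, sub_eq_zero, h1]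
  | succ n ih =>
    have h1 := ih a
    have h2 := ih (a - 1)
    have hT : (T 1 : ℤ[T;T⁻¹]) * T (-1) = 1 := by rw [← T_add]; simp
    rw [qb_succ, qb_succ]
    simp only [Nat.cast_succ, neg_sub, T_sub, T_add] at h1 h2 ⊢
    linear_combination T a * h1 + h2 - qb n (a - 1) * T n * T 1 * T a * T (-a) * hT

lemma neg_one_pow_natAbs_one_sub {R : Type*} [Ring R] (j : ℤ) :
    (-1 : R) ^ (1 - j).natAbs = -(-1) ^ j.natAbs := by
  rw [← Int.coe_negOnePow, ← Int.coe_negOnePow, Int.negOnePow_sub, Int.negOnePow_one]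
  simp

lemma natCast_pentagonal_neg (j : ℤ) : (pentagonal (-j) : ℤ) = pentagonal j + j := by
  linarith [two_mul_natCast_pentagonal j, two_mul_natCast_pentagonal_neg j]

lemma natCast_pentagonal_one_sub (j : ℤ) :
    (pentagonal (1 - j) : ℤ) = pentagonal j + (1 - 2 * j) := by
  linarith [two_mul_natCast_pentagonal j, two_mul_natCast_pentagonal (1 - j)]

/-- `f n k = signedSum n (pentagonal ·) k k`; the free exponent `e` and offsets `a`, `b` absorb
what the `q`-Pascal rule and the reflections `j ↦ -j`, `j ↦ 1 - j` produce. -/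
noncomputable def signedSum (n : ℕ) (e : ℤ → ℤ) (a b : ℤ) : ℤ[T;T⁻¹] :=
  ∑ᶠ j : ℤ, (-1 : ℤ[T;T⁻¹]) ^ j.natAbs * T (e j) * qb n (a - j) * qb n (b + j)

section signedSum

variable (n : ℕ) (e : ℤ → ℤ) (a b : ℤ)

lemma hasFiniteSupport_signedSum_summand : Function.HasFiniteSupport
    fun j => (-1 : ℤ[T;T⁻¹]) ^ j.natAbs * T (e j) * qb n (a - j) * qb n (b + j) :=
  ((hasFiniteSupport_qb_sub n a).fun_mul_right _).fun_mul_left _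

lemma T_mul_signedSum (c : ℤ) : T c * signedSum n e a b = signedSum n (fun j => e j + c) a b := by
  rw [signedSum, mul_finsum]
  exact finsum_congr fun j => by rw [T_add]; ring

lemma signedSum_comm : signedSum n e a b = signedSum n (fun j => e (-j)) b a := by
  rw [signedSum, ← finsum_comp_equiv (Equiv.neg ℤ)]
  refine finsum_congr fun j => ?_
  rw [Equiv.neg_apply, Int.natAbs_neg, sub_neg_eq_add, ← sub_eq_add_neg]
  ring

lemma signedSum_eq_zero_of_symm (he : ∀ j, e (1 - j) = e j) : signedSum n e a (a - 1) = 0 := by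
  have h : signedSum n e a (a - 1) = -signedSum n e a (a - 1) := by
    rw [signedSum, ← finsum_neg_distrib, ← finsum_comp_equiv (Equiv.subLeft 1)]
    refine finsum_congr fun j => ?_
    rw [Equiv.subLeft_apply, he, neg_one_pow_natAbs_one_sub,
      show a - (1 - j) = a - 1 + j by ring, show a - 1 + (1 - j) = a - j by ring]
    ring
  have htwo : (2 : ℤ[T;T⁻¹]) ≠ 0 := by
    have := (Polynomial.toLaurent_ne_zero (R := ℤ) (f := 2)).mpr two_ne_zero
    rwa [map_ofNat] at this
  exact (mul_eq_zero.mp (by linear_combination h : (2 : ℤ[T;T⁻¹]) * _ = 0)).resolve_left htwo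

lemma signedSum_succ : signedSum (n + 1) e a b =
    signedSum n (fun j => e j + a + b) a b + signedSum n (fun j => e j - j + a) a (b - 1) +
      signedSum n (fun j => e j + j + b) (a - 1) b + signedSum n e (a - 1) (b - 1) := by
  have hs := hasFiniteSupport_signedSum_summand n
  simp only [signedSum]
  rw [← finsum_add_distrib (hs _ _ _) (hs _ _ _),
    ← finsum_add_distrib ((hs _ _ _).fun_add (hs _ _ _)) (hs _ _ _),
    ← finsum_add_distrib (((hs _ _ _).fun_add (hs _ _ _)).fun_add (hs _ _ _)) (hs _ _ _)]
  refine finsum_congr fun j => ?_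
  rw [qb_succ, qb_succ, show e j + a + b = e j + (a - j) + (b + j) by ring,
    show e j - j + a = e j + (a - j) by ring, show e j + j + b = e j + (b + j) by ring,
    show a - j - 1 = a - 1 - j by ring, show b + j - 1 = b - 1 + j by ring]
  simp only [T_add]
  ring

lemma signedSum_absorb : signedSum n (fun j => e j + j + b) a b =
    signedSum n e a b + signedSum n (fun j => e j - j + (n + 1 - b)) a (b - 1)
      - signedSum n e a (b - 1) := by
  have hs := hasFiniteSupport_signedSum_summand n
  simp only [signedSum]
  rw [← finsum_add_distrib (hs _ _ _) (hs _ _ _),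
    ← finsum_sub_distrib ((hs _ _ _).fun_add (hs _ _ _)) (hs _ _ _)]
  refine finsum_congr fun j => ?_
  have h := T_sub_one_mul_qb n (b + j)
  rw [show e j + j + b = e j + (b + j) by ring,
    show e j - j + (n + 1 - b) = e j + (n + 1 - (b + j)) by ring,
    show b - 1 + j = b + j - 1 by ring, T_add (e j), T_add (e j)]
  linear_combination (-1 : ℤ[T;T⁻¹]) ^ j.natAbs * T (e j) * qb n (a - j) * h

end signedSum

lemma signedSum_pentagonal_sub_eq_zero (n : ℕ) (a c : ℤ) :
    signedSum n (fun j => pentagonal j - j + c) a (a - 1) = 0 :=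
  signedSum_eq_zero_of_symm _ _ _ fun j => by rw [natCast_pentagonal_one_sub]; ring

lemma signedSum_pentagonal_add_comm (n : ℕ) (a b c : ℤ) :
    signedSum n (fun j => pentagonal j + j + c) a b =
      signedSum n (fun j => pentagonal j + c) b a := by
  rw [signedSum_comm]
  congr 1
  funext j
  rw [natCast_pentagonal_neg]
  ring

lemma f_eq_signedSum (n : ℕ) (k : ℤ) : f n k = signedSum n (pentagonal ·) k k := by
  simp only [f, signedSum, natCast_pentagonal]

lemma f_sub_T_mul_f (n : ℕ) (k : ℤ) :
    f n k - T k * f n k = signedSum n (pentagonal ·) k (k - 1) := by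
  have h := signedSum_absorb n (pentagonal ·) k k
  rw [signedSum_pentagonal_add_comm, signedSum_pentagonal_sub_eq_zero, ← T_mul_signedSum] at h
  rw [f_eq_signedSum]
  linear_combination -h

theorem stmt5 (n : ℕ) (hn : 1 ≤ n) (k : ℤ) :
    f n k = T k * f (n - 1) k + f (n - 1) (k - 1) := by
  obtain ⟨m, rfl⟩ := Nat.exists_eq_add_of_le' hn
  have h := signedSum_succ m (pentagonal ·) k k
  rw [signedSum_pentagonal_sub_eq_zero, signedSum_pentagonal_add_comm, ← T_mul_signedSum,
    ← T_mul_signedSum, ← T_mul_signedSum, ← f_eq_signedSum, ← f_eq_signedSum, ← f_eq_signedSum,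
    ← f_sub_T_mul_f] at h
  rw [Nat.add_sub_cancel, h]
  ring
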